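/- In the orthogonal setting, if a, b ∈ V satisfy B(a,a) = 0, B(b,b) = 0 and B(a,b) = 0 (i.e. the span of a and b is a singular subspace), then for every X ∈ gl(V)_B one has ⁅D_{a,b}, ⁅D_{a,b}, X⁆⁆ = 2·B(X a, b)·D_{a,b}; in particular, if D_{a,b} ≠ 0 then D_{a,b} is an extremal element of the Lie algebra gl(V)_B. -/

import Mathlib

/-! Since `D_{a,b}` squares to zero when `⟨a, b⟩` is singular, `⁅D, ⁅D, X⁆⁆ = -2·DXD`, and
`DXD = -B(Xa,b)·D` because a `B`-skew `X` satisfies `B(Xu,u) = 0` and `B(Xb,a) = -B(Xa,b)`. -/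

/-- The endomorphism `D_{a,b} : x ↦ B(x,a)·b − B(x,b)·a` of the orthogonal setting. -/
def DOrth {k V : Type*} [Field k] [AddCommGroup V] [Module k V]
    (B : LinearMap.BilinForm k V) (a b : V) : Module.End k V :=
  (B.flip a).smulRight b - (B.flip b).smulRight a

theorem lie_lie_eq_neg_two_mul_of_mul_self_eq_zero {A : Type*} [Ring A] {d : A} (hd : d * d = 0)
    (x : A) : ⁅d, ⁅d, x⁆⁆ = -(2 * (d * x * d)) := by
  have hdx : d * (d * x) = 0 := by rw [← mul_assoc, hd, zero_mul]
  have hxd : x * d * d = 0 := by rw [mul_assoc, hd, mul_zero]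
  simp only [Ring.lie_def, mul_sub, sub_mul, hdx, hxd, ← mul_assoc]
  noncomm_ring

section

variable {k V : Type*} [Field k] [AddCommGroup V] [Module k V] (B : LinearMap.BilinForm k V)

theorem DOrth_apply (a b x : V) : DOrth B a b x = B x a • b - B x b • a := rfl

theorem DOrth_mul_self {a b : V} (haa : B a a = 0) (hbb : B b b = 0) (hab : B a b = 0)
    (hba : B b a = 0) : DOrth B a b * DOrth B a b = 0 := by
  ext x
  simp [DOrth_apply, haa, hbb, hab, hba]

theorem DOrth_mul_mul_DOrth (X : Module.End k V) {a b : V} (hXaa : B (X a) a = 0)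
    (hXbb : B (X b) b = 0) (hXba : B (X b) a = -B (X a) b) :
    DOrth B a b * X * DOrth B a b = -B (X a) b • DOrth B a b := by
  ext x
  simp only [Module.End.mul_apply, LinearMap.smul_apply, DOrth_apply, map_sub, map_smul,
    hXaa, hXbb, hXba]
  module

theorem apply_self_eq_zero_of_skew (hchar : (2 : k) ≠ 0) (hsymm : ∀ u v : V, B u v = B v u)
    {X : Module.End k V} (hX : ∀ u v : V, B (X u) v = -B u (X v)) (u : V) : B (X u) u = 0 := by
  have h : (2 : k) * B (X u) u = 0 := by linear_combination hX u u - hsymm u (X u)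
  exact (mul_eq_zero.1 h).resolve_left hchar

theorem DOrth_lie_DOrth_lie (hchar : (2 : k) ≠ 0) (hsymm : ∀ u v : V, B u v = B v u) {a b : V}
    (haa : B a a = 0) (hbb : B b b = 0) (hab : B a b = 0) {X : Module.End k V}
    (hX : ∀ u v : V, B (X u) v = -B u (X v)) :
    ⁅DOrth B a b, ⁅DOrth B a b, X⁆⁆ = (2 * B (X a) b) • DOrth B a b := by
  have hXba : B (X b) a = -B (X a) b := by rw [hX, hsymm b]
  rw [lie_lie_eq_neg_two_mul_of_mul_self_eq_zero
      (DOrth_mul_self B haa hbb hab (hsymm b a ▸ hab)),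
    DOrth_mul_mul_DOrth B X (apply_self_eq_zero_of_skew B hchar hsymm hX a)
      (apply_self_eq_zero_of_skew B hchar hsymm hX b) hXba, two_mul]
  module

end

/-- In the orthogonal setting, if the span of `a` and `b` is singular
(`B(a,a) = B(b,b) = B(a,b) = 0`), then `⁅D_{a,b}, ⁅D_{a,b}, X⁆⁆ = 2·B(Xa,b)·D_{a,b}`
for every `X ∈ gl(V)_B`; in particular, if `D_{a,b} ≠ 0` then `D_{a,b}` is an extremal
element of `gl(V)_B`. -/
theorem stmt13 {k V : Type*} [Field k] [AddCommGroup V] [Module k V]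
    (hchar : (2 : k) ≠ 0)
    (B : LinearMap.BilinForm k V) (hsymm : ∀ u v : V, B u v = B v u)
    (a b : V) (haa : B a a = 0) (hbb : B b b = 0) (hab : B a b = 0) :
    (∀ X : Module.End k V, (∀ u v : V, B (X u) v = -B u (X v)) →
      ⁅DOrth B a b, ⁅DOrth B a b, X⁆⁆ = (2 * B (X a) b) • DOrth B a b) ∧
    (DOrth B a b ≠ 0 →
      ∀ X : Module.End k V, (∀ u v : V, B (X u) v = -B u (X v)) →
        ⁅DOrth B a b, ⁅DOrth B a b, X⁆⁆ ∈
          Submodule.span k ({DOrth B a b} : Set (Module.End k V))) := by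
  have h := fun (X : Module.End k V) (hX : ∀ u v : V, B (X u) v = -B u (X v)) ↦
    DOrth_lie_DOrth_lie B hchar hsymm haa hbb hab hX
  refine ⟨h, fun _ X hX ↦ ?_⟩
  rw [h X hX]
  exact Submodule.smul_mem _ _ (Submodule.mem_span_singleton_self _)
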